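/- There exists a constant C > 0 such that for every x ∈ ℝ³ with ‖x‖ ≥ 2 one has the Euler-type estimate |⟨x, ∇Φ̃(x)⟩ + 2·Φ̃(x)| ≤ C·‖x‖^{−3} (in particular Φ̃ is differentiable at every such x). -/

import Mathlib

open Real MeasureTheory

/-- The solid angle of the unit circle, computed from the flat disk Seifert surface:
`Φ̃(x) = −(x₃/(4π)) ∫_{y₁²+y₂²≤1} ‖(y₁,y₂,0) − x‖⁻³ dy₁ dy₂`. -/
noncomputable def solidAngleDisk (x : EuclideanSpace ℝ (Fin 3)) : ℝ :=
  -(x 2 / (4 * π)) *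
    ∫ p in {p : ℝ × ℝ | p.1 ^ 2 + p.2 ^ 2 ≤ 1},
      (‖((WithLp.equiv 2 (Fin 3 → ℝ)).symm ![p.1, p.2, 0]) - x‖ ^ 3)⁻¹

namespace SolidAngleAux

open Filter

noncomputable def sdE (p : ℝ × ℝ) : EuclideanSpace ℝ (Fin 3) :=
  (WithLp.equiv 2 (Fin 3 → ℝ)).symm ![p.1, p.2, 0]

noncomputable def sdF' (x : EuclideanSpace ℝ (Fin 3)) (a : ℝ × ℝ) :
    EuclideanSpace ℝ (Fin 3) →L[ℝ] ℝ :=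
  (3 * (‖sdE a - x‖ ^ 5)⁻¹) • (innerSL ℝ (sdE a - x))

lemma sdE_cont : Continuous sdE := by
  apply (PiLp.continuous_toLp 2 (fun _ : Fin 3 => ℝ)).comp
  refine continuous_pi fun i => ?_
  fin_cases i <;> simp <;> fun_prop

lemma norm_sdE_le {p : ℝ × ℝ} (hp : p.1 ^ 2 + p.2 ^ 2 ≤ 1) : ‖sdE p‖ ≤ 1 := by
  rw [EuclideanSpace.norm_eq]
  rw [show ∑ i : Fin 3, ‖sdE p i‖ ^ 2 = p.1 ^ 2 + p.2 ^ 2 by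
    simp [sdE, Fin.sum_univ_three, Real.norm_eq_abs, sq_abs, WithLp.equiv_symm_apply, PiLp.toLp_apply]]
  calc √(p.1 ^ 2 + p.2 ^ 2) ≤ √1 := Real.sqrt_le_sqrt hp
  _ = 1 := Real.sqrt_one

lemma coord_le_norm (x : EuclideanSpace ℝ (Fin 3)) (i : Fin 3) : |x i| ≤ ‖x‖ := by
  rw [EuclideanSpace.norm_eq, show |x i| = √(‖x i‖ ^ 2) by simp [Real.sqrt_sq_eq_abs]]
  exact Real.sqrt_le_sqrt <| Finset.single_le_sum (f := fun j => ‖x j‖ ^ 2)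
    (fun j _ => by positivity) (Finset.mem_univ i)

lemma rpow_helper {r : ℝ} (hr : 0 ≤ r) (n : ℕ) :
    (r ^ 2 : ℝ) ^ (-(n / 2 : ℝ)) = (r ^ n)⁻¹ := by
  rw [← Real.rpow_natCast r 2, ← Real.rpow_mul hr,
    show ((2:ℕ):ℝ) * (-((n:ℝ)/2)) = -(n:ℝ) by push_cast; ring,
    Real.rpow_neg hr, Real.rpow_natCast]

lemma sdF_hasFDeriv (a : ℝ × ℝ) (x : EuclideanSpace ℝ (Fin 3)) (hx : sdE a ≠ x) :
    HasFDerivAt (fun v : EuclideanSpace ℝ (Fin 3) => (‖sdE a - v‖ ^ 3)⁻¹) (sdF' x a) x := by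
  have hu0 : sdE a - x ≠ 0 := sub_ne_zero.2 hx
  have hn : (0:ℝ) < ‖sdE a - x‖ := norm_pos_iff.2 hu0
  have hf : HasFDerivAt (fun v : EuclideanSpace ℝ (Fin 3) => sdE a - v)
      (-(ContinuousLinearMap.id ℝ (EuclideanSpace ℝ (Fin 3)))) x := by
    simpa using (hasFDerivAt_id x).const_sub (sdE a)
  have hq := hf.inner ℝ hf
  have hq0 : (inner ℝ (sdE a - x) (sdE a - x) : ℝ) ≠ 0 := by
    rw [real_inner_self_eq_norm_sq]; positivity
  have hr := hq.rpow_const (p := -(3/2 : ℝ)) (Or.inl hq0)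
  have funeq : (fun v : EuclideanSpace ℝ (Fin 3) => (‖sdE a - v‖ ^ 3)⁻¹)
      = fun v : EuclideanSpace ℝ (Fin 3) =>
        (inner ℝ (sdE a - v) (sdE a - v) : ℝ) ^ (-(3/2 : ℝ)) := by
    funext v
    rw [real_inner_self_eq_norm_sq, show -(3/2 : ℝ) = -((3:ℕ)/2 : ℝ) by norm_num,
      rpow_helper (norm_nonneg _)]
  rw [funeq]
  refine hr.congr_fderiv ?_
  ext w
  simp only [sdF', ContinuousLinearMap.smul_apply, innerSL_apply_apply, ContinuousLinearMap.coe_smul',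
    Pi.smul_apply, ContinuousLinearMap.coe_comp', Function.comp_apply,
    ContinuousLinearMap.prod_apply, ContinuousLinearMap.neg_apply, ContinuousLinearMap.coe_id',
    id_eq, fderivInnerCLM_apply, smul_eq_mul]
  rw [real_inner_self_eq_norm_sq, show (-(3/2 : ℝ) - 1) = -((5:ℕ)/2 : ℝ) by norm_num,
    rpow_helper (norm_nonneg _)]
  rw [inner_neg_right, inner_neg_left, real_inner_comm]
  ring

end SolidAngleAux

open SolidAngleAux

set_option maxHeartbeats 1000000 in
/-- There exists `C > 0` such that for every `x ∈ ℝ³` with `‖x‖ ≥ 2`, `Φ̃` is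
differentiable at `x` and the Euler-type estimate
`|⟨x, ∇Φ̃(x)⟩ + 2·Φ̃(x)| ≤ C·‖x‖⁻³` holds. -/
theorem solidAngleDisk_euler_estimate :
    ∃ C : ℝ, 0 < C ∧ ∀ x : EuclideanSpace ℝ (Fin 3), 2 ≤ ‖x‖ →
      DifferentiableAt ℝ solidAngleDisk x ∧
        |(inner ℝ x (gradient solidAngleDisk x) : ℝ) + 2 * solidAngleDisk x| ≤
          C / ‖x‖ ^ 3 := by
  classical
  refine ⟨16, by norm_num, fun x hx => ?_⟩
  set S : Set (ℝ × ℝ) := {p : ℝ × ℝ | p.1 ^ 2 + p.2 ^ 2 ≤ 1} with hSdef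
  have hSm : MeasurableSet S :=
    (isClosed_le (by fun_prop) continuous_const).measurableSet
  have hx0 : (0:ℝ) < ‖x‖ := by linarith
  -- finite volume of S
  have hSsub : S ⊆ Set.Icc ((-1 : ℝ), (-1 : ℝ)) (1, 1) := by
    rintro ⟨p1, p2⟩ hp
    simp only [hSdef, Set.mem_setOf_eq] at hp
    constructor <;> constructor <;> simp <;> nlinarith
  have hIccvol : (volume (Set.Icc ((-1 : ℝ), (-1 : ℝ)) (1, 1))) = (4 : ENNReal) := by
    rw [MeasureTheory.Measure.volume_eq_prod, Set.Icc_prod_eq, MeasureTheory.Measure.prod_prod,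
      Real.volume_Icc]
    norm_num
  have hSvol : volume S ≤ 4 := hIccvol ▸ measure_mono hSsub
  have hSfin : volume S < ⊤ := lt_of_le_of_lt hSvol (by norm_num)
  haveI : IsFiniteMeasure (volume.restrict S) :=
    ⟨by rwa [Measure.restrict_apply_univ]⟩
  -- lower bounds
  have hlow2 : ∀ a ∈ S, ‖x‖ / 2 ≤ ‖sdE a - x‖ := by
    intro a ha
    have h1 : ‖sdE a‖ ≤ 1 := norm_sdE_le ha
    have h2 : ‖x‖ - ‖sdE a‖ ≤ ‖x - sdE a‖ := norm_sub_norm_le _ _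
    rw [norm_sub_rev] at h2
    linarith
  have hlow : ∀ a ∈ S, ∀ v ∈ Metric.ball x (1/2 : ℝ), (1/2 : ℝ) ≤ ‖sdE a - v‖ := by
    intro a ha v hv
    have h1 : ‖sdE a‖ ≤ 1 := norm_sdE_le ha
    have h2 : ‖v‖ - ‖sdE a‖ ≤ ‖v - sdE a‖ := norm_sub_norm_le _ _
    rw [norm_sub_rev] at h2
    have h3 : ‖x - v‖ < 1/2 := by
      rw [← dist_eq_norm, dist_comm]; exact hv
    have h4 : ‖x‖ - ‖v‖ ≤ ‖x - v‖ := norm_sub_norm_le _ _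
    linarith
  -- the integrand
  set F : EuclideanSpace ℝ (Fin 3) → ℝ × ℝ → ℝ := fun v a => (‖sdE a - v‖ ^ 3)⁻¹ with hFdef
  have measF : ∀ v : EuclideanSpace ℝ (Fin 3), AEStronglyMeasurable (F v) (volume.restrict S) := by
    intro v
    exact (((sdE_cont.sub continuous_const).norm.pow 3).measurable.inv).aestronglyMeasurable
  have hFx_int : Integrable (F x) (volume.restrict S) := by
    refine Integrable.mono' (integrable_const 1) (measF x) ?_
    rw [ae_restrict_iff' hSm]
    refine Filter.Eventually.of_forall fun a ha => ?_
    have h1 : (1:ℝ) ≤ ‖sdE a - x‖ := le_trans (by linarith) (hlow2 a ha)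
    have h2 : (0:ℝ) < ‖sdE a - x‖ ^ 3 := by positivity
    rw [hFdef, Real.norm_eq_abs, abs_of_pos (by positivity)]
    rw [inv_le_one_iff₀]
    right
    exact one_le_pow₀ h1
  have hF'x_meas : AEStronglyMeasurable (fun a => sdF' x a) (volume.restrict S) := by
    have h1 : Measurable fun a => (3 * (‖sdE a - x‖ ^ 5)⁻¹ : ℝ) :=
      (measurable_const.mul (((sdE_cont.sub continuous_const).norm.pow 5).measurable.inv))
    have h2 : Continuous fun a => innerSL ℝ (sdE a - x) :=
      (innerSL ℝ).continuous.comp (sdE_cont.sub continuous_const)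
    exact h1.aestronglyMeasurable.smul h2.aestronglyMeasurable
  have hbound : ∀ᵐ a ∂(volume.restrict S), ∀ v ∈ Metric.ball x (1/2 : ℝ),
      ‖sdF' v a‖ ≤ 48 := by
    rw [ae_restrict_iff' hSm]
    refine Filter.Eventually.of_forall fun a ha v hv => ?_
    have h1 : (1/2 : ℝ) ≤ ‖sdE a - v‖ := hlow a ha v hv
    have h2 : (0:ℝ) < ‖sdE a - v‖ := by linarith
    calc ‖sdF' v a‖ = ‖(3 * (‖sdE a - v‖ ^ 5)⁻¹ : ℝ)‖ * ‖innerSL ℝ (sdE a - v)‖ := by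
          rw [sdF']; exact norm_smul (3 * (‖sdE a - v‖ ^ 5)⁻¹ : ℝ) (innerSL ℝ (sdE a - v))
      _ = 3 * (‖sdE a - v‖ ^ 5)⁻¹ * ‖sdE a - v‖ := by
          rw [innerSL_apply_norm, Real.norm_eq_abs, abs_of_pos (by positivity)]
      _ = 3 * (‖sdE a - v‖ ^ 4)⁻¹ := by
          field_simp
      _ ≤ 3 * ((1/2 : ℝ) ^ 4)⁻¹ := by gcongr
      _ = 48 := by norm_num
  have hdiff : ∀ᵐ a ∂(volume.restrict S), ∀ v ∈ Metric.ball x (1/2 : ℝ),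
      HasFDerivAt (fun w => F w a) (sdF' v a) v := by
    rw [ae_restrict_iff' hSm]
    refine Filter.Eventually.of_forall fun a ha v hv => ?_
    have h1 : (1/2 : ℝ) ≤ ‖sdE a - v‖ := hlow a ha v hv
    have hne : sdE a ≠ v := by
      intro h
      rw [h, sub_self, norm_zero] at h1; linarith
    exact sdF_hasFDeriv a v hne
  have hFmeasnb : ∀ᶠ v in nhds x, AEStronglyMeasurable (F v) (volume.restrict S) :=
    Filter.Eventually.of_forall measF
  have hFint := hasFDerivAt_integral_of_dominated_of_fderiv_le (F := F) (F' := sdF')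
    (μ := volume.restrict S) (bound := fun _ => (48:ℝ)) (Metric.ball_mem_nhds x (by norm_num : (0:ℝ) < 1/2))
    hFmeasnb hFx_int hF'x_meas hbound (integrable_const _) hdiff
  -- the linear part
  set L : EuclideanSpace ℝ (Fin 3) →L[ℝ] ℝ :=
    (-(4 * π)⁻¹ : ℝ) • (EuclideanSpace.proj (2 : Fin 3) : EuclideanSpace ℝ (Fin 3) →L[ℝ] ℝ)
    with hLdef
  have hLapp : ∀ v : EuclideanSpace ℝ (Fin 3), L v = -(v 2 / (4 * π)) := by
    intro v
    simp [hLdef]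
    ring
  have hceq : (fun v : EuclideanSpace ℝ (Fin 3) => -(v 2 / (4 * π))) = ⇑L := by
    funext v; rw [hLapp]
  have hc : HasFDerivAt (fun v : EuclideanSpace ℝ (Fin 3) => -(v 2 / (4 * π))) L x := by
    rw [hceq]; exact L.hasFDerivAt
  have hphi_eq : solidAngleDisk = fun v : EuclideanSpace ℝ (Fin 3) => (-(v 2 / (4 * π))) * ∫ a in S, F v a := rfl
  set D : EuclideanSpace ℝ (Fin 3) →L[ℝ] ℝ :=
    (-(x 2 / (4 * π))) • (∫ a in S, sdF' x a) + (∫ a in S, F x a) • L with hDdef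
  have hphi : HasFDerivAt solidAngleDisk D x := by
    rw [hphi_eq]
    exact hc.mul hFint
  refine ⟨hphi.differentiableAt, ?_⟩
  -- gradient identification
  have hg : HasGradientAt solidAngleDisk ((InnerProductSpace.toDual ℝ (EuclideanSpace ℝ (Fin 3))).symm D) x :=
    hasFDerivAt_iff_hasGradientAt.mp hphi
  rw [hg.gradient]
  have hinner : (inner ℝ x ((InnerProductSpace.toDual ℝ (EuclideanSpace ℝ (Fin 3))).symm D) : ℝ)
      = D x := by
    rw [real_inner_comm, InnerProductSpace.toDual_symm_apply]
  rw [hinner]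
  -- integrability pieces
  have hF'int : Integrable (fun a => sdF' x a) (volume.restrict S) := by
    refine Integrable.mono' (integrable_const 48) hF'x_meas ?_
    filter_upwards [hbound] with a ha
    exact ha x (Metric.mem_ball_self (by norm_num))
  have i1 : Integrable (fun a => (sdF' x a) x) (volume.restrict S) :=
    (ContinuousLinearMap.apply ℝ ℝ x).integrable_comp hF'int
  have i2 : Integrable (fun a => 3 * F x a) (volume.restrict S) := hFx_int.const_mul 3
  -- compute D x + 2 Φ x
  have happ : D x = -(x 2 / (4 * π)) * (∫ a in S, (sdF' x a) x)
      + (∫ a in S, F x a) * (-(x 2 / (4 * π))) := by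
    rw [hDdef]
    simp only [ContinuousLinearMap.add_apply, ContinuousLinearMap.coe_smul', Pi.smul_apply,
      smul_eq_mul]
    rw [ContinuousLinearMap.integral_apply hF'int, hLapp]
  have hΦx : solidAngleDisk x = -(x 2 / (4 * π)) * ∫ a in S, F x a := rfl
  set G : ℝ × ℝ → ℝ := fun a =>
    3 * (‖sdE a - x‖ ^ 5)⁻¹ * (inner ℝ (sdE a - x) (sdE a) : ℝ) with hGdef
  have hsum : D x + 2 * solidAngleDisk x = -(x 2 / (4 * π)) * ∫ a in S, G a := by
    rw [happ, hΦx]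
    rw [show -(x 2 / (4 * π)) * (∫ a in S, (sdF' x a) x) + (∫ a in S, F x a) * (-(x 2 / (4 * π)))
        + 2 * (-(x 2 / (4 * π)) * ∫ a in S, F x a)
      = -(x 2 / (4 * π)) * ((∫ a in S, (sdF' x a) x) + 3 * ∫ a in S, F x a) by ring]
    congr 1
    rw [show (3 : ℝ) * ∫ a in S, F x a = ∫ a in S, 3 * F x a by
      rw [integral_const_mul]]
    rw [← integral_add i1 i2]
    refine setIntegral_congr_fun hSm fun a ha => ?_
    have h1 : (1:ℝ) ≤ ‖sdE a - x‖ := le_trans (by linarith) (hlow2 a ha)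
    have hne : ‖sdE a - x‖ ≠ 0 := by linarith
    simp only [sdF', ContinuousLinearMap.smul_apply, innerSL_apply_apply, smul_eq_mul, hGdef, hFdef]
    have hsplit : (‖sdE a - x‖ ^ 3)⁻¹ = (‖sdE a - x‖ ^ 5)⁻¹ * ‖sdE a - x‖ ^ 2 := by
      field_simp
    have key : (inner ℝ (sdE a - x) (sdE a) : ℝ) = (inner ℝ (sdE a - x) x : ℝ) + ‖sdE a - x‖ ^ 2 := by
      have h := inner_add_right (𝕜 := ℝ) (sdE a - x) x (sdE a - x)
      rw [real_inner_self_eq_norm_sq, show x + (sdE a - x) = sdE a by abel] at h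
      linarith
    rw [hsplit, key]
    ring
  rw [hsum]
  -- final estimate
  have hGbound : ∀ a ∈ S, ‖G a‖ ≤ 48 * (‖x‖ ^ 4)⁻¹ := by
    intro a ha
    have h1 : ‖x‖ / 2 ≤ ‖sdE a - x‖ := hlow2 a ha
    have h2 : (0:ℝ) < ‖sdE a - x‖ := lt_of_lt_of_le (by linarith) h1
    have h3 : |(inner ℝ (sdE a - x) (sdE a) : ℝ)| ≤ ‖sdE a - x‖ * 1 := by
      calc |(inner ℝ (sdE a - x) (sdE a) : ℝ)| ≤ ‖sdE a - x‖ * ‖sdE a‖ :=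
            abs_real_inner_le_norm _ _
        _ ≤ ‖sdE a - x‖ * 1 := by gcongr; exact norm_sdE_le ha
    calc ‖G a‖ = 3 * (‖sdE a - x‖ ^ 5)⁻¹ * |(inner ℝ (sdE a - x) (sdE a) : ℝ)| := by
          rw [hGdef, Real.norm_eq_abs, abs_mul, abs_of_pos (by positivity)]
      _ ≤ 3 * (‖sdE a - x‖ ^ 5)⁻¹ * (‖sdE a - x‖ * 1) := by gcongr
      _ = 3 * (‖sdE a - x‖ ^ 4)⁻¹ := by field_simp
      _ ≤ 3 * ((‖x‖ / 2) ^ 4)⁻¹ := by gcongr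
      _ = 48 * (‖x‖ ^ 4)⁻¹ := by
          rw [div_pow]
          rw [inv_div]
          field_simp
          ring
  have hIntG : ‖∫ a in S, G a‖ ≤ 48 * (‖x‖ ^ 4)⁻¹ * 4 := by
    have h := norm_integral_le_of_norm_le (μ := volume.restrict S) (f := G) (g := fun _ => 48 * (‖x‖ ^ 4)⁻¹)
      (integrable_const _) (by
        rw [ae_restrict_iff' hSm]
        exact Filter.Eventually.of_forall hGbound)
    refine h.trans ?_
    rw [setIntegral_const, smul_eq_mul]
    have htoReal : (volume S).toReal ≤ 4 := by
      have := ENNReal.toReal_mono (by norm_num) hSvol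
      simpa using this
    calc (volume S).toReal * (48 * (‖x‖ ^ 4)⁻¹) ≤ 4 * (48 * (‖x‖ ^ 4)⁻¹) := by
          gcongr
      _ = 48 * (‖x‖ ^ 4)⁻¹ * 4 := by ring
  have hcx : |(-(x 2 / (4 * π)))| ≤ ‖x‖ / (4 * π) := by
    rw [abs_neg, abs_div, abs_of_pos (by positivity : (0:ℝ) < 4 * π)]
    gcongr
    exact coord_le_norm x 2
  calc |(-(x 2 / (4 * π))) * ∫ a in S, G a|
      = |(-(x 2 / (4 * π)))| * ‖∫ a in S, G a‖ := by
        rw [abs_mul, Real.norm_eq_abs]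
    _ ≤ (‖x‖ / (4 * π)) * (48 * (‖x‖ ^ 4)⁻¹ * 4) := by
        refine mul_le_mul hcx hIntG (norm_nonneg _) (by positivity)
    _ = 48 / (π * ‖x‖ ^ 3) := by
        have hxne : ‖x‖ ≠ 0 := hx0.ne'
        field_simp
    _ ≤ 16 / ‖x‖ ^ 3 := by
        rw [div_le_div_iff₀ (by positivity) (by positivity)]
        nlinarith [pow_pos hx0 3, Real.pi_gt_three]
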